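/- Let C := {n : ℕ | Th(M_n) is consistent}. Suppose F : ℕ →. ℕ is a partial computable function such that C ⊆ dom(F) and for every n ∈ C, F(n) ∉ W_n (i.e. F(n) is not the code of any sentence of Th(M_n)). Then the theory {φ : ring sentence | encode φ is a value of F} is inconsistent, i.e. not satisfiable. -/

import Mathlib

open FirstOrder Language

/-- Sentences of the language of rings are countable. -/
instance : Countable (Σ n, Language.ring.BoundedFormula Empty n) :=
  Language.BoundedFormula.listEncode_sigma_injective.countable

instance : Countable Language.ring.Sentence :=
  Function.Injective.countable
    (f := fun φ : Language.ring.Sentence =>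
      (⟨0, φ⟩ : Σ n, Language.ring.BoundedFormula Empty n))
    (fun _ _ h => by simpa using h)

/-- Gödel numbering of ring sentences. -/
noncomputable instance : Encodable Language.ring.Sentence :=
  Encodable.ofCountable _

/-- `W e` is the domain of the `e`-th partial computable function: the `e`-th
computably enumerable set. -/
def W (e : ℕ) : Set ℕ := {x : ℕ | ((Denumerable.ofNat Nat.Partrec.Code e).eval x).Dom}

/-- `ThM e` is the theory (set of ring sentences) produced by the `e`-th Turing machine. -/
noncomputable def ThM (e : ℕ) : Language.ring.Theory :=
  {φ : Language.ring.Sentence | Encodable.encode φ ∈ W e}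

/-!
The range of a partial computable function `F` is c.e., so it is `W e` for some index `e`, and
then `Th(M_e)` is exactly the theory in question. If that theory were consistent, `e` would lie
in `C`, so `F e` would be defined, and its value lies in the range of `F` = `W e`, contradicting
the diagonal hypothesis at `e`.
-/

open Nat.Partrec

theorem REPred.exists_W_eq {p : ℕ → Prop} (hp : REPred p) : ∃ e, W e = {x | p x} := by
  have hnat : Nat.Partrec fun a => (Part.assert (p a) fun _ => Part.some ()).map fun _ => 0 :=
    Partrec.nat_iff.1 (hp.map (Computable.const 0).to₂)
  obtain ⟨c, hc⟩ := Code.exists_code.1 hnat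
  refine ⟨Encodable.encode c, ?_⟩
  ext x
  simp [W, hc, Part.assert]

theorem Partrec.ran_re {f : ℕ →. ℕ} (hf : Partrec f) : REPred (· ∈ f.ran) := by
  obtain ⟨c, hc⟩ := Code.exists_code.1 (Partrec.nat_iff.1 hf)
  -- search the pairs `(n, k)` for a `k`-step run of `c` on `n` that outputs `m`
  let search : ℕ → ℕ → Option Unit := fun m p =>
    (Code.evaln p.unpair.2 c p.unpair.1).bind fun v => if v = m then some () else Option.none
  have hsearch : Computable₂ search := by
    refine Computable.option_bind ?_ ?_
    · exact (Code.primrec_evaln.comp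
        (((Primrec.snd.comp (Primrec.unpair.comp Primrec.snd)).pair
          (Primrec.const c)).pair
          (Primrec.fst.comp (Primrec.unpair.comp Primrec.snd)))).to_comp
    · exact (Primrec.ite (Primrec.eq.comp Primrec.snd (Primrec.fst.comp Primrec.fst))
        (Primrec.const (some ())) (Primrec.const Option.none)).to_comp
  refine (Partrec.rfindOpt hsearch).dom_re.of_eq fun m => ?_
  simp only [Nat.rfindOpt_dom, PFun.ran, Set.mem_ofPred_eq, ← hc, Code.evaln_complete]
  constructor
  · rintro ⟨p, _, hp⟩
    simp only [search, Option.mem_def, Option.bind_eq_some_iff] at hp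
    obtain ⟨v, hv, hvm⟩ := hp
    split_ifs at hvm with h
    exact ⟨p.unpair.1, p.unpair.2, h ▸ hv⟩
  · rintro ⟨n, k, hk⟩
    exact ⟨Nat.pair n k, (), by simp [search, Option.mem_def.1 hk]⟩

/-- If `C = {n | Th(M n) is consistent}` and `F` is a partial computable function
defined on all of `C` with `F n ∉ W n` for every `n ∈ C`, then the theory consisting
of the sentences whose Gödel codes are values of `F` is inconsistent (not satisfiable). -/
theorem stmt_1 (C : Set ℕ) (hC : C = {n : ℕ | (ThM n).IsSatisfiable})
    (F : ℕ →. ℕ) (hF : Partrec F)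
    (hdom : C ⊆ {n : ℕ | (F n).Dom})
    (hdiag : ∀ n ∈ C, ∀ m ∈ F n, m ∉ W n) :
    ¬ Theory.IsSatisfiable
      {φ : Language.ring.Sentence | ∃ n, (Encodable.encode φ : ℕ) ∈ F n} := by
  intro hsat
  obtain ⟨e, he⟩ := hF.ran_re.exists_W_eq
  have hThM : ThM e = {φ : Language.ring.Sentence | ∃ n, (Encodable.encode φ : ℕ) ∈ F n} := by
    simp [ThM, he, PFun.ran]
  have heC : e ∈ C := by rw [hC, Set.mem_ofPred_eq, hThM]; exact hsat
  obtain ⟨m, hm⟩ := Part.dom_iff_mem.1 (hdom heC)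
  exact hdiag e heC m hm (he ▸ ⟨e, hm⟩)
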